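/- arXiv:2409.20292 — 5 statements merged into one kernel-verified Lean document; each statement's English description precedes it below -/
import Mathlib

section
/- In the Hopf algebra H(e_{±1}, f_{±1}, u, v), the coproduct defined on generators by Δ(e_i) = e_i ⊗ e_i + f_i ⊗ f_{−i}, Δ(f_i) = e_i ⊗ f_i + f_i ⊗ e_{−i}, Δ(u) = 1 ⊗ u + u ⊗ e_1 + v ⊗ f_{−1}, Δ(v) = 1 ⊗ v + u ⊗ f_1 + v ⊗ e_{−1}, is coassociative on generators: (Δ ⊗ id)Δ(x) = (id ⊗ Δ)Δ(x) for x ∈ {e_i, f_i, u, v}. -/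
open TensorProduct

/-- in `H(e_{±1}, f_{±1}, u, v)`, the coproduct (the algebra map
with the given values on generators) is coassociative on the generators
`e_i`, `f_i`, `u`, `v`. -/
theorem stmt11 {k H : Type*} [CommRing k] [Ring H] [Algebra k H]
    (e f : ℤ → H) (u v : H)
    (h01 : e 0 + f 0 = 1)
    (hee : ∀ i j, e i * e j = e (i + j))
    (hff : ∀ i j, f i * f j = f (i + j))
    (hef : ∀ i j, e i * f j = 0)
    (hfe : ∀ i j, f j * e i = 0)
    (heu : ∀ i, e i * u = if Even i then u * e i else -(u * e i))
    (hfu : ∀ i, f i * u = if Even i then u * f i else -(u * f i))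
    (hev : ∀ i, e i * v = if Even i then v * e i else -(v * e i))
    (hfv : ∀ i, f i * v = if Even i then v * f i else -(v * f i))
    (hu2 : u * u = 0) (hv2 : v * v = 0) (huv : u * v = -(v * u))
    (Δ : H →ₐ[k] H ⊗[k] H)
    (hΔe : ∀ i, Δ (e i) = e i ⊗ₜ[k] e i + f i ⊗ₜ[k] f (-i))
    (hΔf : ∀ i, Δ (f i) = e i ⊗ₜ[k] f i + f i ⊗ₜ[k] e (-i))
    (hΔu : Δ u = 1 ⊗ₜ[k] u + u ⊗ₜ[k] e 1 + v ⊗ₜ[k] f (-1))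
    (hΔv : Δ v = 1 ⊗ₜ[k] v + u ⊗ₜ[k] f 1 + v ⊗ₜ[k] e (-1)) :
    ∀ x : H, ((∃ i, x = e i) ∨ (∃ i, x = f i) ∨ x = u ∨ x = v) →
      (TensorProduct.assoc k H H H)
        ((TensorProduct.map Δ.toLinearMap LinearMap.id) (Δ x)) =
      (TensorProduct.map LinearMap.id Δ.toLinearMap) (Δ x) := by
  rintro x (⟨i, rfl⟩ | ⟨i, rfl⟩ | rfl | rfl) <;>
    simp only [hΔe, hΔf, hΔu, hΔv, map_add, TensorProduct.map_tmul,
      AlgHom.toLinearMap_apply, LinearMap.id_coe, id_eq, TensorProduct.assoc_tmul,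
      map_one, Algebra.TensorProduct.one_def, neg_neg,
      TensorProduct.add_tmul, TensorProduct.tmul_add] <;> abel
end

section
/- In H(e_{±1}, f_{±1}, u, v), with ε given by ε(e_i) = 1, ε(f_i) = 0, ε(u) = ε(v) = 0, and S the algebra anti-homomorphism with S(e_i) = e_{−i}, S(f_i) = f_i, S(u) = −v f_{−1} − u e_{−1}, S(v) = −u f_1 − v e_1, the antipode axiom m∘(S⊗id)∘Δ(x) = ε(x)1 = m∘(id⊗S)∘Δ(x) holds for each generator x ∈ {e_i, f_i, u, v}. -/
open TensorProduct

/-- in `H(e_{±1}, f_{±1}, u, v)`, the antipode axiom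
`m ∘ (S ⊗ id) ∘ Δ (x) = ε(x) 1 = m ∘ (id ⊗ S) ∘ Δ (x)` holds for every
generator `x ∈ {e_i, f_i, u, v}`. -/
theorem stmt12 {k H : Type*} [CommRing k] [Ring H] [Algebra k H]
    (e f : ℤ → H) (u v : H)
    (h01 : e 0 + f 0 = 1)
    (hee : ∀ i j, e i * e j = e (i + j))
    (hff : ∀ i j, f i * f j = f (i + j))
    (hef : ∀ i j, e i * f j = 0)
    (hfe : ∀ i j, f j * e i = 0)
    (heu : ∀ i, e i * u = if Even i then u * e i else -(u * e i))
    (hfu : ∀ i, f i * u = if Even i then u * f i else -(u * f i))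
    (hev : ∀ i, e i * v = if Even i then v * e i else -(v * e i))
    (hfv : ∀ i, f i * v = if Even i then v * f i else -(v * f i))
    (hu2 : u * u = 0) (hv2 : v * v = 0) (huv : u * v = -(v * u))
    (Δ : H →ₐ[k] H ⊗[k] H)
    (hΔe : ∀ i, Δ (e i) = e i ⊗ₜ[k] e i + f i ⊗ₜ[k] f (-i))
    (hΔf : ∀ i, Δ (f i) = e i ⊗ₜ[k] f i + f i ⊗ₜ[k] e (-i))
    (hΔu : Δ u = 1 ⊗ₜ[k] u + u ⊗ₜ[k] e 1 + v ⊗ₜ[k] f (-1))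
    (hΔv : Δ v = 1 ⊗ₜ[k] v + u ⊗ₜ[k] f 1 + v ⊗ₜ[k] e (-1))
    (ε : H →ₐ[k] k)
    (hεe : ∀ i, ε (e i) = 1) (hεf : ∀ i, ε (f i) = 0)
    (hεu : ε u = 0) (hεv : ε v = 0)
    (S : H →ₗ[k] H)
    (hS1 : S 1 = 1) (hSanti : ∀ a b : H, S (a * b) = S b * S a)
    (hSe : ∀ i, S (e i) = e (-i)) (hSf : ∀ i, S (f i) = f i)
    (hSu : S u = -(v * f (-1)) - u * e (-1))
    (hSv : S v = -(u * f 1) - v * e 1) :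
    ∀ x : H, ((∃ i, x = e i) ∨ (∃ i, x = f i) ∨ x = u ∨ x = v) →
      (LinearMap.mul' k H) ((TensorProduct.map S LinearMap.id) (Δ x)) =
          algebraMap k H (ε x) ∧
      (LinearMap.mul' k H) ((TensorProduct.map LinearMap.id S) (Δ x)) =
          algebraMap k H (ε x) := by
  have key : ∀ w : H, w * e 0 + w * f 0 = w := fun w => by rw [← mul_add, h01, mul_one]
  rintro x (⟨i, rfl⟩ | ⟨i, rfl⟩ | rfl | rfl)
  · constructor <;>
      simp [hΔe, LinearMap.mul'_apply, hSe, hSf, hεe, hee, hff, h01]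
  · constructor <;>
      simp [hΔf, LinearMap.mul'_apply, hSe, hSf, hεf, hef, hfe]
  · constructor
    · simp only [hΔu, map_add, TensorProduct.map_tmul, LinearMap.mul'_apply,
        LinearMap.id_apply, hS1, hSu, hεu, hSv, map_zero]
      simp only [sub_mul, neg_mul, mul_assoc, hfe, hee, hef, hff, mul_zero,
        neg_zero, zero_sub, one_mul]
      norm_num
      rw [add_assoc, ← neg_add, key, add_neg_cancel]
    · simp only [hΔu, map_add, TensorProduct.map_tmul, LinearMap.mul'_apply,
        LinearMap.id_apply, hS1, hSu, hεu, hSv, hSe, hSf, map_zero, mul_one, one_mul]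
      abel
  · constructor
    · simp only [hΔv, map_add, TensorProduct.map_tmul, LinearMap.mul'_apply,
        LinearMap.id_apply, hS1, hSu, hεv, hSv, map_zero]
      simp only [sub_mul, neg_mul, mul_assoc, hfe, hee, hef, hff, mul_zero,
        neg_zero, zero_sub, one_mul]
      norm_num
      rw [add_assoc, ← neg_add, add_comm (x * f 0), key, add_neg_cancel]
    · simp only [hΔv, map_add, TensorProduct.map_tmul, LinearMap.mul'_apply,
        LinearMap.id_apply, hS1, hSu, hεv, hSv, hSe, hSf, map_zero, mul_one, one_mul]
      norm_num
      abel
end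

section
/- In H(e_{±1}, f_{±1}, u, v), the map S defined on generators by S(e_i) = e_{−i}, S(f_i) = f_i, S(u) = −v f_{−1} − u e_{−1}, S(v) = −u f_1 − v e_1 extends to an algebra anti-homomorphism; in particular S(u)S(u) = 0, S(v)S(v) = 0, S(v)S(u) = −S(u)S(v), S(u)S(e_i) = (−1)^i S(e_i)S(u), and S(u)S(f_i) = (−1)^i S(f_i)S(u). -/
/-- in `H(e_{±1}, f_{±1}, u, v)`, the values of the antipode on
the generators, `S(e_i) = e_{−i}`, `S(f_i) = f_i`,
`S(u) = −v f_{−1} − u e_{−1}`, `S(v) = −u f_1 − v e_1`, satisfy the relations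
required for `S` to extend to an algebra anti-homomorphism:
`S(u)S(u) = 0`, `S(v)S(v) = 0`, `S(v)S(u) = −S(u)S(v)`,
`S(u)S(e_i) = (−1)^i S(e_i)S(u)` and `S(u)S(f_i) = (−1)^i S(f_i)S(u)`. -/
theorem stmt13 {H : Type*} [Ring H]
    (e f : ℤ → H) (u v : H)
    (h01 : e 0 + f 0 = 1)
    (hee : ∀ i j, e i * e j = e (i + j))
    (hff : ∀ i j, f i * f j = f (i + j))
    (hef : ∀ i j, e i * f j = 0)
    (hfe : ∀ i j, f j * e i = 0)
    (heu : ∀ i, e i * u = if Even i then u * e i else -(u * e i))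
    (hfu : ∀ i, f i * u = if Even i then u * f i else -(u * f i))
    (hev : ∀ i, e i * v = if Even i then v * e i else -(v * e i))
    (hfv : ∀ i, f i * v = if Even i then v * f i else -(v * f i))
    (hu2 : u * u = 0) (hv2 : v * v = 0) (huv : u * v = -(v * u))
    (Su Sv : H)
    (hSu : Su = -(v * f (-1)) - u * e (-1))
    (hSv : Sv = -(u * f 1) - v * e 1) :
    Su * Su = 0 ∧ Sv * Sv = 0 ∧ Sv * Su = -(Su * Sv) ∧
    (∀ i : ℤ, Su * e (-i) = if Even i then e (-i) * Su else -(e (-i) * Su)) ∧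
    (∀ i : ℤ, Su * f i = if Even i then f i * Su else -(f i * Su)) := by
  subst hSu hSv
  have hee' : ∀ i j (x : H), e i * (e j * x) = e (i + j) * x := fun i j x => by
    rw [← mul_assoc, hee]
  have hff' : ∀ i j (x : H), f i * (f j * x) = f (i + j) * x := fun i j x => by
    rw [← mul_assoc, hff]
  have hef' : ∀ i j (x : H), e i * (f j * x) = 0 := fun i j x => by
    rw [← mul_assoc, hef, zero_mul]
  have hfe' : ∀ i j (x : H), f j * (e i * x) = 0 := fun i j x => by
    rw [← mul_assoc, hfe, zero_mul]
  have heu' : ∀ i (x : H), e i * (u * x) =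
      if Even i then u * (e i * x) else -(u * (e i * x)) := fun i x => by
    rw [← mul_assoc, heu]; split <;> simp [mul_assoc]
  have hfu' : ∀ i (x : H), f i * (u * x) =
      if Even i then u * (f i * x) else -(u * (f i * x)) := fun i x => by
    rw [← mul_assoc, hfu]; split <;> simp [mul_assoc]
  have hev' : ∀ i (x : H), e i * (v * x) =
      if Even i then v * (e i * x) else -(v * (e i * x)) := fun i x => by
    rw [← mul_assoc, hev]; split <;> simp [mul_assoc]
  have hfv' : ∀ i (x : H), f i * (v * x) =
      if Even i then v * (f i * x) else -(v * (f i * x)) := fun i x => by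
    rw [← mul_assoc, hfv]; split <;> simp [mul_assoc]
  have hu2' : ∀ x : H, u * (u * x) = 0 := fun x => by rw [← mul_assoc, hu2, zero_mul]
  have hv2' : ∀ x : H, v * (v * x) = 0 := fun x => by rw [← mul_assoc, hv2, zero_mul]
  have huv' : ∀ x : H, u * (v * x) = -(v * (u * x)) := fun x => by
    rw [← mul_assoc, huv]; simp [mul_assoc]
  have hnm1 : ¬ Even (-1 : ℤ) := by decide
  have hn1 : ¬ Even (1 : ℤ) := by decide
  refine ⟨?_, ?_, ?_, ?_, ?_⟩
  · simp only [sub_mul, mul_sub, neg_mul, mul_neg, neg_neg, mul_assoc]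
    simp [hfv', hfu', hev', heu', hef', hfe', hu2', hv2', huv', hef, hfe,
      hnm1, hn1]
  · simp only [sub_mul, mul_sub, neg_mul, mul_neg, neg_neg, mul_assoc]
    simp [hfv', hfu', hev', heu', hef', hfe', hu2', hv2', huv', hef, hfe,
      hnm1, hn1]
  · simp only [sub_mul, mul_sub, neg_mul, mul_neg, neg_neg, mul_assoc]
    simp only [hfv', hfu', hev', heu', hef', hfe', hu2', hv2', huv', hee', hff',
      hee, hff, hef, hfe, hnm1, hn1, if_false, if_neg, mul_neg, mul_zero,
      neg_neg, neg_zero]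
    abel
  · intro i
    by_cases h : Even i <;>
      simp [sub_mul, mul_sub, neg_mul, mul_neg, add_mul, mul_add, mul_assoc,
        hfv', hfu', hev', heu', hef', hfe', hee', hff', hee, hff, hef, hfe,
        heu, hfu, hev, hfv, h, even_neg, add_comm, sub_eq_add_neg]
  · intro i
    by_cases h : Even i <;>
      simp [sub_mul, mul_sub, neg_mul, mul_neg, add_mul, mul_add, mul_assoc,
        hfv', hfu', hev', heu', hef', hfe', hee', hff', hee, hff, hef, hfe,
        heu, hfu, hev, hfv, h, even_neg, add_comm, sub_eq_add_neg]
end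

section
/- In H(e_{±1}, f_{±1}, u, v), the 2×2 matrix [[e_i u, f_i v], [f_{−i} u, e_{−i} v]] is a (C_i, C_{i+1})-primitive matrix for each i ≥ 1, i.e. Δ of each entry equals the sum Σ_k (C_i)_{jk} ⊗ X_{kl} + Σ_t X_{jt} ⊗ (C_{i+1})_{tl}. -/
open TensorProduct

/-- in `H(e_{±1}, f_{±1}, u, v)`, for each `i ≥ 1` the `2×2`
matrix `X = [[e_i u, f_i v], [f_{−i} u, e_{−i} v]]` is a
`(C_i, C_{i+1})`-primitive matrix, where
`C_i = [[e_i, f_i], [f_{−i}, e_{−i}]]`: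
`Δ(X_{jl}) = Σ_k (C_i)_{jk} ⊗ X_{kl} + Σ_t X_{jt} ⊗ (C_{i+1})_{tl}`. -/
theorem stmt16 {k H : Type*} [CommRing k] [Ring H] [Algebra k H]
    (e f : ℤ → H) (u v : H)
    (h01 : e 0 + f 0 = 1)
    (hee : ∀ i j, e i * e j = e (i + j))
    (hff : ∀ i j, f i * f j = f (i + j))
    (hef : ∀ i j, e i * f j = 0)
    (hfe : ∀ i j, f j * e i = 0)
    (heu : ∀ i, e i * u = if Even i then u * e i else -(u * e i))
    (hfu : ∀ i, f i * u = if Even i then u * f i else -(u * f i))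
    (hev : ∀ i, e i * v = if Even i then v * e i else -(v * e i))
    (hfv : ∀ i, f i * v = if Even i then v * f i else -(v * f i))
    (hu2 : u * u = 0) (hv2 : v * v = 0) (huv : u * v = -(v * u))
    (Δ : H →ₐ[k] H ⊗[k] H)
    (hΔe : ∀ i, Δ (e i) = e i ⊗ₜ[k] e i + f i ⊗ₜ[k] f (-i))
    (hΔf : ∀ i, Δ (f i) = e i ⊗ₜ[k] f i + f i ⊗ₜ[k] e (-i))
    (hΔu : Δ u = 1 ⊗ₜ[k] u + u ⊗ₜ[k] e 1 + v ⊗ₜ[k] f (-1))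
    (hΔv : Δ v = 1 ⊗ₜ[k] v + u ⊗ₜ[k] f 1 + v ⊗ₜ[k] e (-1)) :
    ∀ i : ℤ, 1 ≤ i →
      ∀ j l : Fin 2,
        Δ ((![![e i * u, f i * v], ![f (-i) * u, e (-i) * v]]) j l) =
          (∑ t : Fin 2, (![![e i, f i], ![f (-i), e (-i)]]) j t ⊗ₜ[k]
              (![![e i * u, f i * v], ![f (-i) * u, e (-i) * v]]) t l) +
          ∑ t : Fin 2, (![![e i * u, f i * v], ![f (-i) * u, e (-i) * v]]) j t ⊗ₜ[k]
              (![![e (i+1), f (i+1)], ![f (-(i+1)), e (-(i+1))]]) t l := by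
  intro i _ j l
  fin_cases j <;> fin_cases l <;>
    simp only [Fin.mk_zero, Fin.mk_one, Fin.isValue, Matrix.cons_val', Matrix.cons_val_zero,
      Matrix.cons_val_one, Matrix.head_cons, Matrix.empty_val', Matrix.cons_val_fin_one,
      Matrix.head_fin_const, Fin.sum_univ_two, map_mul, hΔe, hΔf, hΔu, hΔv] <;>
    simp only [add_mul, mul_add, Algebra.TensorProduct.tmul_mul_tmul, mul_one, one_mul,
      hee, hff, hef, hfe, TensorProduct.tmul_zero, TensorProduct.zero_tmul, add_zero, zero_add,
      neg_neg] <;>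
    rw [show (-i : ℤ) + -1 = -(i+1) by ring] <;>
    abel
end

section
/- Let A be a unital based ring with basis S and suppose c, s ∈ S are central elements of A with s = c* (the anti-involution image). Suppose there exist distinct basis elements (d_i)_{i≥0} of S with d_0 = s satisfying the relations d_{2i}·c = d_{2i−1} + d_{2i+1} and d_{2i+1}·s = d_{2i} + d_{2i+2} for all applicable i, together with s·c = 1 + g + d_1 for some basis element g. Then the subring of A generated by c and s contains all d_i, i.e. every d_i appears with nonzero coefficient in some product c^m s^n. -/
/-! All coefficients of a product of basis elements are nonnegative, so once `d k` occurs in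
`c^m s^n`, multiplying by the next letter of the alternating word `c s c s …` makes `d (k+1)`
occur: the defining relations exhibit `d (k+1)` in `d k · c` or `d k · s`, and no cancellation
can remove it. Centrality of `c` lets the word be regrouped as `c^m s^n`. -/

namespace Module.Basis

variable {A I : Type*} [Ring A] (B : Module.Basis I ℤ A)

theorem repr_mul_apply (x y : A) (t : I) :
    B.repr (x * y) t = (B.repr x).sum fun j a => a * B.repr (B j * y) t := by
  conv_lhs => rw [← B.linearCombination_repr x]
  rw [Finsupp.linearCombination_apply, Finsupp.sum, Finset.sum_mul, map_sum,
    Finsupp.sum, Finsupp.coe_finsetSum, Finset.sum_apply]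
  refine Finset.sum_congr rfl fun j _ => ?_
  rw [smul_mul_assoc, map_smul, Finsupp.smul_apply, smul_eq_mul]

theorem repr_self_apply_nonneg (i t : I) : 0 ≤ B.repr (B i) t := by
  rw [B.repr_self]
  exact Finsupp.single_nonneg.2 zero_le_one t

theorem repr_add_self_apply_pos {x : A} {t : I} (hx : 0 ≤ B.repr x t) :
    0 < B.repr (x + B t) t := by
  rw [map_add, Finsupp.add_apply, B.repr_self, Finsupp.single_eq_same]
  omega

theorem repr_mul_basis_nonneg (hpos : ∀ i j t, 0 ≤ B.repr (B i * B j) t) {x : A}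
    (hx : ∀ t, 0 ≤ B.repr x t) (j t : I) : 0 ≤ B.repr (x * B j) t := by
  rw [repr_mul_apply]
  exact Finset.sum_nonneg fun i _ => mul_nonneg (hx i) (hpos i j t)

theorem repr_mul_basis_pos (hpos : ∀ i j t, 0 ≤ B.repr (B i * B j) t) {x : A}
    (hx : ∀ t, 0 ≤ B.repr x t) {i j t : I} (hi : 0 < B.repr x i)
    (hij : 0 < B.repr (B i * B j) t) : 0 < B.repr (x * B j) t := by
  rw [repr_mul_apply, Finsupp.sum]
  calc 0 < B.repr x i * B.repr (B i * B j) t := mul_pos hi hij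
    _ ≤ _ := Finset.single_le_sum (f := fun k => B.repr x k * B.repr (B k * B j) t)
        (fun k _ => mul_nonneg (hx k) (hpos k j t)) (Finsupp.mem_support_iff.2 hi.ne')

theorem repr_nonneg_of_mem_closure (hone : ∀ t, 0 ≤ B.repr 1 t)
    (hpos : ∀ i j t, 0 ≤ B.repr (B i * B j) t) {x : A}
    (hx : x ∈ Submonoid.closure (Set.range B)) (t : I) : 0 ≤ B.repr x t := by
  induction hx using Submonoid.closure_induction_right generalizing t with
  | one => exact hone t
  | mul_right x _ _ hy ih =>
    obtain ⟨j, rfl⟩ := hy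
    exact B.repr_mul_basis_nonneg hpos ih j t

theorem repr_pow_mul_pow_nonneg (hone : ∀ t, 0 ≤ B.repr 1 t)
    (hpos : ∀ i j t, 0 ≤ B.repr (B i * B j) t)
    (c s : I) (m n : ℕ) (t : I) :
    0 ≤ B.repr (B c ^ m * B s ^ n) t := by
  have hmem {i : I} {k : ℕ} : B i ^ k ∈ Submonoid.closure (Set.range B) :=
    pow_mem (Submonoid.subset_closure (Set.mem_range_self i)) k
  exact B.repr_nonneg_of_mem_closure hone hpos (mul_mem hmem hmem) t

section PowMulPow

variable {c s : I} {m n : ℕ} {j t : I}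

theorem repr_pow_succ_mul_pow_pos (hone : ∀ t, 0 ≤ B.repr 1 t)
    (hpos : ∀ i j t, 0 ≤ B.repr (B i * B j) t) (hcs : Commute (B c) (B s))
    (hj : 0 < B.repr (B c ^ m * B s ^ n) j) (hjt : 0 < B.repr (B j * B c) t) :
    0 < B.repr (B c ^ (m + 1) * B s ^ n) t := by
  rw [pow_succ, mul_assoc, (hcs.pow_right n).eq, ← mul_assoc]
  exact B.repr_mul_basis_pos hpos (B.repr_pow_mul_pow_nonneg hone hpos _ _ _ _) hj hjt

theorem repr_pow_mul_pow_succ_pos (hone : ∀ t, 0 ≤ B.repr 1 t)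
    (hpos : ∀ i j t, 0 ≤ B.repr (B i * B j) t)
    (hj : 0 < B.repr (B c ^ m * B s ^ n) j) (hjt : 0 < B.repr (B j * B s) t) :
    0 < B.repr (B c ^ m * B s ^ (n + 1)) t := by
  rw [pow_succ, ← mul_assoc]
  exact B.repr_mul_basis_pos hpos (B.repr_pow_mul_pow_nonneg hone hpos _ _ _ _) hj hjt

theorem exists_repr_pow_mul_pow_pos_of_chain (hone : ∀ t, 0 ≤ B.repr 1 t)
    (hpos : ∀ i j t, 0 ≤ B.repr (B i * B j) t) (hcs : Commute (B c) (B s))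
    {d : ℕ → I} (hd0 : d 0 = s)
    (hstep_c : ∀ i, 0 < B.repr (B (d (2 * i)) * B c) (d (2 * i + 1)))
    (hstep_s : ∀ i, 0 < B.repr (B (d (2 * i + 1)) * B s) (d (2 * i + 2))) (k : ℕ) :
    ∃ m n : ℕ, 0 < B.repr (B c ^ m * B s ^ n) (d k) := by
  have hpair : ∀ i, (∃ m n : ℕ, 0 < B.repr (B c ^ m * B s ^ n) (d (2 * i))) ∧
      ∃ m n : ℕ, 0 < B.repr (B c ^ m * B s ^ n) (d (2 * i + 1)) := by
    intro i
    induction i with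
    | zero =>
      have hd0_pos : 0 < B.repr (B c ^ 0 * B s ^ 1) (d 0) := by simp [hd0]
      exact ⟨⟨0, 1, hd0_pos⟩,
        1, 1, B.repr_pow_succ_mul_pow_pos hone hpos hcs hd0_pos (hstep_c 0)⟩
    | succ i ih =>
      obtain ⟨m, n, hodd_pos⟩ := ih.2
      have heven_pos := B.repr_pow_mul_pow_succ_pos hone hpos hodd_pos (hstep_s i)
      exact ⟨⟨m, n + 1, heven_pos⟩,
        m + 1, n + 1, B.repr_pow_succ_mul_pow_pos hone hpos hcs heven_pos (hstep_c (i + 1))⟩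
  obtain ⟨i, rfl | rfl⟩ := Nat.even_or_odd' k
  exacts [(hpair i).1, (hpair i).2]

end PowMulPow

end Module.Basis

theorem stmt19_general {A I : Type*} [Ring A]
    (B : Module.Basis I ℤ A) (i₀ : I) (hone : B i₀ = 1)
    (hpos : ∀ i j t, 0 ≤ B.repr (B i * B j) t)
    (c s : I)
    (hc_central : ∀ x : A, B c * x = x * B c)
    (d : ℕ → I) (hd0 : d 0 = s)
    (g : I)
    (hsc : B s * B c = 1 + B g + B (d 1))
    (heven : ∀ i : ℕ, 1 ≤ i → B (d (2 * i)) * B c = B (d (2 * i - 1)) + B (d (2 * i + 1)))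
    (hodd : ∀ i : ℕ, B (d (2 * i + 1)) * B s = B (d (2 * i)) + B (d (2 * i + 2))) :
    ∀ i : ℕ, ∃ m n : ℕ, B.repr ((B c) ^ m * (B s) ^ n) (d i) ≠ 0 := by
  have hone' : ∀ t, 0 ≤ B.repr 1 t := hone ▸ B.repr_self_apply_nonneg i₀
  have hstep_c : ∀ i, 0 < B.repr (B (d (2 * i)) * B c) (d (2 * i + 1)) := by
    rintro (_ | i)
    · rw [Nat.mul_zero, hd0, hsc]
      refine B.repr_add_self_apply_pos ?_
      rw [map_add, Finsupp.add_apply]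
      exact add_nonneg (hone' _) (B.repr_self_apply_nonneg _ _)
    · rw [heven (i + 1) (by omega)]
      exact B.repr_add_self_apply_pos (B.repr_self_apply_nonneg _ _)
  have hstep_s : ∀ i, 0 < B.repr (B (d (2 * i + 1)) * B s) (d (2 * i + 2)) := fun i => by
    rw [hodd i]
    exact B.repr_add_self_apply_pos (B.repr_self_apply_nonneg _ _)
  intro k
  obtain ⟨m, n, h⟩ := B.exists_repr_pow_mul_pow_pos_of_chain hone' hpos (hc_central (B s)) hd0
    hstep_c hstep_s k
  exact ⟨m, n, h.ne'⟩

/-- let `A` be a unital based ring with `ℤ₊`-basis indexed by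
`I`, with `c, s ∈ S` central and `s = c*`.  Suppose there are distinct basis
elements `d i` with `d 0 = s`, `s·c = 1 + g + d 1`,
`d (2i)·c = d (2i−1) + d (2i+1)` and `d (2i+1)·s = d (2i) + d (2i+2)`.
Then every `d i` appears with nonzero coefficient in some product `c^m s^n`;
in particular all `d i` lie in the subring generated by `c` and `s`. -/
theorem stmt19 {A I : Type*} [Ring A] [DecidableEq I]
    (B : Module.Basis I ℤ A) (i₀ : I) (hone : B i₀ = 1)
    (hpos : ∀ i j t, 0 ≤ B.repr (B i * B j) t)
    (star : I → I) (hinv : Function.Involutive star)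
    (hanti : ∀ i j t, B.repr (B i * B j) t = B.repr (B (star j) * B (star i)) (star t))
    (c s : I) (hcs : s = star c)
    (hc_central : ∀ x : A, B c * x = x * B c)
    (hs_central : ∀ x : A, B s * x = x * B s)
    (d : ℕ → I) (hd_inj : Function.Injective d) (hd0 : d 0 = s)
    (g : I)
    (hsc : B s * B c = 1 + B g + B (d 1))
    (heven : ∀ i : ℕ, 1 ≤ i → B (d (2 * i)) * B c = B (d (2 * i - 1)) + B (d (2 * i + 1)))
    (hodd : ∀ i : ℕ, B (d (2 * i + 1)) * B s = B (d (2 * i)) + B (d (2 * i + 2))) :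
    ∀ i : ℕ, ∃ m n : ℕ, B.repr ((B c) ^ m * (B s) ^ n) (d i) ≠ 0 :=
  stmt19_general B i₀ hone hpos c s hc_central d hd0 g hsc heven hodd
end
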